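/- Sphere packing bound for constant-dimension LOBC codes: with γ: M_1 × M_2 → C ⊆ P(F_q^m, l)^n a bijective encoder with separation vector (s_1,s_2), s_1 < s_2, and 0 < l < m, one has |M_2| < 4^n · q^{n·l(m−l)} / T_{n,l}(s_1, |M_1|, ⌊(s_2−1)/2⌋). -/

import Mathlib

open Module Finset

/-- Subspace distance `d_S(U,W) = dim(U+W) - dim(U∩W)`. -/
noncomputable def dS {K V : Type*} [Field K] [AddCommGroup V] [Module K V]
    (U W : Submodule K V) : ℕ :=
  finrank K ↥(U ⊔ W) - finrank K ↥(U ⊓ W)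

/-- Extended subspace distance on `n`-tuples of subspaces. -/
noncomputable def dSn {K V : Type*} [Field K] [AddCommGroup V] [Module K V] {n : ℕ}
    (X Y : Fin n → Submodule K V) : ℕ :=
  ∑ i, dS (X i) (Y i)

/-- Ball of radius `r` around a tuple of subspaces. -/
def ballS {K V : Type*} [Field K] [AddCommGroup V] [Module K V] {n : ℕ}
    (r : ℕ) (C : Fin n → Submodule K V) : Set (Fin n → Submodule K V) :=
  {U | dSn U C ≤ r}

/-- `r`-neighborhood of a set of tuples of subspaces. -/
def nbhdS {K V : Type*} [Field K] [AddCommGroup V] [Module K V] {n : ℕ}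
    (r : ℕ) (S : Set (Fin n → Submodule K V)) : Set (Fin n → Submodule K V) :=
  ⋃ C ∈ S, ballS r C

/-- Gaussian binomial coefficient `binom(a,b)_q`, realized as the number of
`b`-dimensional subspaces of `K^a` where `|K| = q`. -/
noncomputable def gaussCard (K : Type*) [Field K] (a b : ℕ) : ℕ :=
  Nat.card {W : Submodule K (Fin a → K) // finrank K ↥W = b}

/-- `r`-neighborhood taken inside the set of constant-dimension (`l`) tuples. -/
def nbhdG {K : Type*} [Field K] {m n : ℕ} (l r : ℕ)
    (S : Set (Fin n → Submodule K (Fin m → K))) : Set (Fin n → Submodule K (Fin m → K)) :=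
  {U | (∀ i, finrank K ↥(U i) = l) ∧ ∃ C ∈ S, dSn U C ≤ r}

/-- `T_{n,l}(d,N,r)`: minimum cardinality of an `r`-neighborhood (within
`P(F_q^m,l)^n`) of a constant-dimension code of size `N` and minimum distance `≥ d`. -/
noncomputable def Tnl (K : Type*) [Field K] (m n l d N r : ℕ) : ℕ :=
  sInf {t | ∃ S : Set (Fin n → Submodule K (Fin m → K)),
    (∀ X ∈ S, ∀ i, finrank K ↥(X i) = l) ∧ Nat.card ↥S = N ∧
    (∀ X ∈ S, ∀ Y ∈ S, X ≠ Y → d ≤ dSn X Y) ∧ t = Nat.card ↥(nbhdG l r S)}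

/-!
For a fixed second message `b`, the codewords `γ (·, b)` form a constant-dimension code of
size `|M₁|` and minimum distance at least `s₁`, so its `r`-neighbourhood, `r = ⌊(s₂ - 1)/2⌋`, has
at least `T_{n,l}(s₁, |M₁|, r)` points. Codewords with different second messages are at distance
at least `s₂ > 2r`, so these neighbourhoods are pairwise disjoint subsets of
`P(F_q^m, l)^n`, which has `binom(m,l)_q ^ n` points. Finally `binom(m,l)_q < 4 q^{l(m-l)}`:
counting ordered bases gives `binom(m,l)_q · ∏_{i<l} (q^l - q^i) = ∏_{i<l} (q^m - q^i) ≤ q^{ml}`,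
and `∏_{j≥1} (1 - q^{-j}) > 1/4` for `q ≥ 2`.
-/

section SubspaceDistance

variable {K V : Type*} [Field K] [AddCommGroup V] [Module K V]

lemma dS_self (U : Submodule K V) : dS U U = 0 := by
  rw [dS, sup_idem, inf_idem, Nat.sub_self]

lemma dS_comm (U W : Submodule K V) : dS U W = dS W U := by
  rw [dS, dS, sup_comm, inf_comm]

lemma dSn_self {n : ℕ} (X : Fin n → Submodule K V) : dSn X X = 0 := by
  simp [dSn, dS_self]

lemma dSn_comm {n : ℕ} (X Y : Fin n → Submodule K V) : dSn X Y = dSn Y X := by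
  simp only [dSn, dS_comm]

variable [FiniteDimensional K V]

lemma dS_add_finrank_add_finrank (U W : Submodule K V) :
    dS U W + finrank K U + finrank K W = 2 * finrank K ↥(U ⊔ W) := by
  have hmod := Submodule.finrank_sup_add_finrank_inf_eq U W
  have hle : finrank K ↥(U ⊓ W) ≤ finrank K ↥(U ⊔ W) :=
    Submodule.finrank_mono (inf_le_left.trans le_sup_left)
  unfold dS
  omega

lemma dS_triangle (U W X : Submodule K V) : dS U X ≤ dS U W + dS W X := by
  have hUX := dS_add_finrank_add_finrank U X
  have hUW := dS_add_finrank_add_finrank U W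
  have hWX := dS_add_finrank_add_finrank W X
  have hmod := Submodule.finrank_sup_add_finrank_inf_eq (U ⊔ W) (W ⊔ X)
  have hsup : finrank K ↥(U ⊔ X) ≤ finrank K ↥((U ⊔ W) ⊔ (W ⊔ X)) :=
    Submodule.finrank_mono (sup_le_sup le_sup_left le_sup_right)
  have hinf : finrank K W ≤ finrank K ↥((U ⊔ W) ⊓ (W ⊔ X)) :=
    Submodule.finrank_mono (le_inf le_sup_right le_sup_left)
  omega

lemma dSn_triangle {n : ℕ} (X Y Z : Fin n → Submodule K V) :
    dSn X Z ≤ dSn X Y + dSn Y Z := by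
  rw [dSn, dSn, dSn, ← Finset.sum_add_distrib]
  exact Finset.sum_le_sum fun i _ => dS_triangle _ _ _

end SubspaceDistance

section Grassmannian

variable {K V : Type*} [Field K] [AddCommGroup V] [Module K V]

lemma span_range_subtype_comp_eq {W : Submodule K V} [FiniteDimensional K W] {l : ℕ}
    (hW : finrank K W = l) {t : Fin l → W} (ht : LinearIndependent K t) :
    Submodule.span K (Set.range (W.subtype ∘ t)) = W := by
  rw [Set.range_comp, Submodule.span_image,
    ht.span_eq_top_of_card_eq_finrank' (by simp [hW]), Submodule.map_subtype_top]

variable [Fintype K]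

/-- Every linearly independent `l`-tuple is an ordered basis of exactly one `l`-dimensional
subspace, namely its span. -/
lemma card_linearIndependent_eq_card_grassmannian_mul [Finite V] (l : ℕ) :
    Nat.card {s : Fin l → V // LinearIndependent K s} =
      Nat.card {W : Submodule K V // finrank K W = l} *
        ∏ i : Fin l, (Fintype.card K ^ l - Fintype.card K ^ i.val) := by
  let f : (Σ W : {W : Submodule K V // finrank K W = l},
      {t : Fin l → W.1 // LinearIndependent K t}) → {s : Fin l → V // LinearIndependent K s} :=
    fun p => ⟨p.1.1.subtype ∘ p.2.1, p.2.2.map' _ (Submodule.ker_subtype _)⟩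
  have hf : Function.Bijective f := by
    constructor
    · rintro ⟨⟨W, hW⟩, ⟨t, ht⟩⟩ ⟨⟨W', hW'⟩, ⟨t', ht'⟩⟩ h
      have hs : W.subtype ∘ t = W'.subtype ∘ t' := congrArg Subtype.val h
      obtain rfl : W = W' := by
        rw [← span_range_subtype_comp_eq hW ht, ← span_range_subtype_comp_eq hW' ht', hs]
      obtain rfl : t = t' := funext fun i => Subtype.ext (congrFun hs i)
      rfl
    · rintro ⟨s, hs⟩
      let W := Submodule.span K (Set.range s)
      have hW : finrank K W = l := by rw [finrank_span_eq_card hs, Fintype.card_fin]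
      exact ⟨⟨⟨W, hW⟩, ⟨fun i => ⟨s i, Submodule.subset_span (Set.mem_range_self i)⟩,
        .of_comp W.subtype hs⟩⟩, rfl⟩
  have : Fintype {W : Submodule K V // finrank K W = l} := Fintype.ofFinite _
  rw [← Nat.card_eq_of_bijective f hf, Nat.card_sigma, Nat.card_eq_fintype_card (α := Subtype _),
    ← smul_eq_mul, ← Finset.card_univ, ← Finset.sum_const]
  refine Finset.sum_congr rfl fun W _ => ?_
  rw [card_linearIndependent W.2.ge, W.2]

end Grassmannian

lemma cast_prod_pow_sub_pow (q a l : ℕ) (hq : 0 < q) (hl : l ≤ a) :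
    ((∏ i : Fin l, (q ^ a - q ^ i.val) : ℕ) : ℝ) = ∏ i ∈ range l, ((q : ℝ) ^ a - (q : ℝ) ^ i) := by
  rw [Fin.prod_univ_eq_prod_range (fun i => q ^ a - q ^ i), Nat.cast_prod]
  refine Finset.prod_congr rfl fun i hi => ?_
  rw [Nat.cast_sub (Nat.pow_le_pow_right hq ((Finset.mem_range.1 hi).le.trans hl))]
  push_cast
  rfl

/-- The term `x ^ (l + 2)` is what keeps the induction going; at `x = 1/2` it also makes the
bound `1/4` strict. -/
lemma one_sub_sub_sq_add_pow_le_prod_one_sub_pow {x : ℝ} (hx0 : 0 ≤ x) (hx1 : x ≤ 1) (l : ℕ) :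
    1 - x - x ^ 2 + x ^ (l + 2) ≤ ∏ j ∈ range (l + 1), (1 - x ^ (j + 1)) := by
  induction l with
  | zero => norm_num
  | succ k ih =>
    rw [Finset.prod_range_succ]
    have ha : 0 ≤ x ^ (k + 2) := pow_nonneg hx0 _
    have ha_le : x ^ (k + 2) ≤ x ^ 2 := pow_le_pow_of_le_one hx0 hx1 (by omega)
    have ha_le_one : x ^ (k + 2) ≤ 1 := pow_le_one₀ hx0 hx1
    calc 1 - x - x ^ 2 + x ^ (k + 1 + 2)
        ≤ (1 - x - x ^ 2 + x ^ (k + 2)) * (1 - x ^ (k + 2)) := by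
          rw [pow_succ' x (k + 2)]
          nlinarith [mul_nonneg ha (sub_nonneg.2 ha_le)]
      _ ≤ (∏ j ∈ range (k + 1), (1 - x ^ (j + 1))) * (1 - x ^ (k + 1 + 1)) :=
          mul_le_mul_of_nonneg_right ih (by linarith)

lemma one_quarter_lt_prod_one_sub_pow {x : ℝ} (hx0 : 0 < x) (hx : x ≤ 1 / 2) (l : ℕ) :
    1 / 4 < ∏ j ∈ range l, (1 - x ^ (j + 1)) := by
  cases l with
  | zero => norm_num
  | succ k =>
    have := one_sub_sub_sq_add_pow_le_prod_one_sub_pow hx0.le (by linarith) k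
    have := pow_pos hx0 (k + 2)
    nlinarith

lemma pow_lt_four_mul_prod_pow_sub_pow {q : ℝ} (hq : 2 ≤ q) (l : ℕ) :
    q ^ (l * l) < 4 * ∏ i ∈ range l, (q ^ l - q ^ i) := by
  have hfactor : ∀ i ∈ range l, q ^ l - q ^ i = q ^ l * (1 - q⁻¹ ^ (l - i)) := by
    intro i hi
    have : q ^ (l - i) ≠ 0 := by positivity
    rw [inv_pow, ← pow_mul_pow_sub q (Finset.mem_range.1 hi).le]
    field_simp
  have hreflect : ∏ i ∈ range l, (1 - q⁻¹ ^ (l - i)) = ∏ j ∈ range l, (1 - q⁻¹ ^ (j + 1)) := by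
    rw [← Finset.prod_range_reflect (fun j => 1 - q⁻¹ ^ (j + 1))]
    refine Finset.prod_congr rfl fun i hi => ?_
    rw [show l - 1 - i + 1 = l - i by have := Finset.mem_range.1 hi; omega]
  have hquarter := one_quarter_lt_prod_one_sub_pow (x := q⁻¹) (by positivity)
    (by rw [inv_le_comm₀ (by linarith) (by norm_num)]; linarith) l
  rw [Finset.prod_congr rfl hfactor, Finset.prod_mul_distrib, Finset.prod_const, card_range,
    ← pow_mul, hreflect]
  nlinarith [pow_pos (by linarith : (0 : ℝ) < q) (l * l)]

theorem card_grassmannian_lt {K V : Type*} [Field K] [Fintype K] [AddCommGroup V] [Module K V]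
    [Finite V] {l : ℕ} (hl : l ≤ finrank K V) :
    (Nat.card {W : Submodule K V // finrank K W = l} : ℝ) <
      4 * (Fintype.card K : ℝ) ^ (l * (finrank K V - l)) := by
  set q := Fintype.card K
  set m := finrank K V
  have hq : (2 : ℝ) ≤ q := by exact_mod_cast Fintype.one_lt_card
  have hcount : (Nat.card {W : Submodule K V // finrank K W = l} : ℝ) *
      ∏ i ∈ range l, ((q : ℝ) ^ l - (q : ℝ) ^ i) = ∏ i ∈ range l, ((q : ℝ) ^ m - (q : ℝ) ^ i) := by
    rw [← cast_prod_pow_sub_pow q l l Fintype.card_pos le_rfl,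
      ← cast_prod_pow_sub_pow q m l Fintype.card_pos hl, ← Nat.cast_mul,
      ← card_linearIndependent_eq_card_grassmannian_mul, card_linearIndependent hl]
  have hupper : ∏ i ∈ range l, ((q : ℝ) ^ m - (q : ℝ) ^ i) ≤
      (q : ℝ) ^ (l * (m - l)) * q ^ (l * l) := by
    calc ∏ i ∈ range l, ((q : ℝ) ^ m - (q : ℝ) ^ i) ≤ ∏ _i ∈ range l, (q : ℝ) ^ m :=
          Finset.prod_le_prod
            (fun i hi => sub_nonneg.2 (pow_le_pow_right₀ (by linarith)
              ((Finset.mem_range.1 hi).le.trans hl)))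
            fun i _ => by linarith [pow_pos (by linarith : (0 : ℝ) < q) i]
      _ = (q : ℝ) ^ (l * (m - l)) * q ^ (l * l) := by
          rw [Finset.prod_const, card_range, ← pow_mul, ← pow_add, ← Nat.mul_add,
            Nat.sub_add_cancel hl, mul_comm]
  have hlower := pow_lt_four_mul_prod_pow_sub_pow hq l
  have hprod_pos : 0 < ∏ i ∈ range l, ((q : ℝ) ^ l - (q : ℝ) ^ i) := by
    linarith [pow_pos (by linarith : (0 : ℝ) < q) (l * l)]
  refine lt_of_mul_lt_mul_right ?_ hprod_pos.le
  calc _ = ∏ i ∈ range l, ((q : ℝ) ^ m - (q : ℝ) ^ i) := hcount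
    _ ≤ (q : ℝ) ^ (l * (m - l)) * q ^ (l * l) := hupper
    _ < (q : ℝ) ^ (l * (m - l)) * (4 * ∏ i ∈ range l, ((q : ℝ) ^ l - (q : ℝ) ^ i)) :=
        mul_lt_mul_of_pos_left hlower (by positivity)
    _ = _ := by ring

theorem gaussCard_lt (K : Type*) [Field K] [Fintype K] {m l : ℕ} (hl : l ≤ m) :
    (gaussCard K m l : ℝ) < 4 * (Fintype.card K : ℝ) ^ (l * (m - l)) := by
  have h := card_grassmannian_lt (K := K) (V := Fin m → K) (l := l) (by rwa [finrank_fin_fun])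
  rw [finrank_fin_fun] at h
  exact h

lemma card_mul_le_card_of_pairwise_disjoint {ι α : Type*} [Finite α] {s : ι → Set α}
    {A : Set α} {T : ℕ} (hdisj : Pairwise fun i j => Disjoint (s i) (s j)) (hsub : ∀ i, s i ⊆ A)
    (hT : ∀ i, T ≤ Nat.card (s i)) : Nat.card ι * T ≤ Nat.card A := by
  rcases finite_or_infinite ι with hι | hι
  · have := Fintype.ofFinite ι
    simp only [Nat.card_coe_set_eq] at hT ⊢
    calc Nat.card ι * T = ∑ i, T := by simp [Nat.card_eq_fintype_card]
      _ ≤ ∑ i, (s i).ncard := Finset.sum_le_sum fun i _ => hT i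
      _ = (⋃ i, s i).ncard := by
          rw [Set.ncard_iUnion_of_finite (fun i => Set.toFinite _) hdisj, finsum_eq_sum_of_fintype]
      _ ≤ A.ncard := Set.ncard_le_ncard (Set.iUnion_subset hsub)
  · simp

section Neighbourhoods

variable {K : Type*} [Field K] {m n l r : ℕ}

lemma card_constDim_tuples :
    Nat.card {U : Fin n → Submodule K (Fin m → K) // ∀ i, finrank K (U i) = l} =
      gaussCard K m l ^ n := by
  rw [Nat.card_congr (Equiv.subtypePiEquivPi
    (p := fun (_ : Fin n) (W : Submodule K (Fin m → K)) => finrank K W = l)), Nat.card_pi,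
    Finset.prod_const, Finset.card_univ, Fintype.card_fin, gaussCard]

lemma nbhdG_subset_constDim (S : Set (Fin n → Submodule K (Fin m → K))) :
    nbhdG l r S ⊆ {U | ∀ i, finrank K (U i) = l} :=
  fun _ hU => hU.1

lemma subset_nbhdG {S : Set (Fin n → Submodule K (Fin m → K))}
    (hS : ∀ X ∈ S, ∀ i, finrank K (X i) = l) : S ⊆ nbhdG l r S :=
  fun X hX => ⟨hS X hX, X, hX, by rw [dSn_self]; exact Nat.zero_le r⟩

lemma disjoint_nbhdG {S S' : Set (Fin n → Submodule K (Fin m → K))}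
    (h : ∀ X ∈ S, ∀ Y ∈ S', 2 * r < dSn X Y) : Disjoint (nbhdG l r S) (nbhdG l r S') := by
  rw [Set.disjoint_left]
  rintro U ⟨-, X, hX, hUX⟩ ⟨-, Y, hY, hUY⟩
  have := dSn_triangle X U Y
  have := h X hX Y hY
  rw [dSn_comm X U] at *
  omega

variable {d N : ℕ} {S : Set (Fin n → Submodule K (Fin m → K))}

lemma Tnl_le_card_nbhdG (hdim : ∀ X ∈ S, ∀ i, finrank K (X i) = l) (hcard : Nat.card S = N)
    (hdist : ∀ X ∈ S, ∀ Y ∈ S, X ≠ Y → d ≤ dSn X Y) :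
    Tnl K m n l d N r ≤ Nat.card (nbhdG l r S) :=
  Nat.sInf_le ⟨S, hdim, hcard, hdist, rfl⟩

lemma le_Tnl [Finite K] (hdim : ∀ X ∈ S, ∀ i, finrank K (X i) = l) (hcard : Nat.card S = N)
    (hdist : ∀ X ∈ S, ∀ Y ∈ S, X ≠ Y → d ≤ dSn X Y) :
    N ≤ Tnl K m n l d N r := by
  refine le_csInf ⟨_, S, hdim, hcard, hdist, rfl⟩ ?_
  rintro _ ⟨S', hdim', rfl, -, rfl⟩
  exact Nat.card_mono (Set.toFinite _) (subset_nbhdG hdim')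

end Neighbourhoods

theorem stmt10_general (q m n l : ℕ) (hlm : l < m)
    (K : Type*) [Field K] [Fintype K] (hq : Fintype.card K = q)
    (M₁ M₂ : Type*) [Finite M₁]
    (γ : M₁ × M₂ → (Fin n → Submodule K (Fin m → K))) (hγ : Function.Injective γ)
    (hdim : ∀ p i, finrank K ↥(γ p i) = l)
    (s₁ s₂ : ℕ) (hs : s₁ < s₂)
    (hs₁ : IsLeast {d | ∃ p p' : M₁ × M₂, p.1 ≠ p'.1 ∧ d = dSn (γ p) (γ p')} s₁)
    (hs₂ : IsLeast {d | ∃ p p' : M₁ × M₂, p.2 ≠ p'.2 ∧ d = dSn (γ p) (γ p')} s₂) :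
    (Nat.card M₂ : ℝ) <
      (4 : ℝ) ^ n * (q : ℝ) ^ (n * (l * (m - l))) /
        (Tnl K m n l s₁ (Nat.card M₁) ((s₂ - 1) / 2) : ℝ) := by
  set r := (s₂ - 1) / 2
  set T := Tnl K m n l s₁ (Nat.card M₁) r
  let C : M₂ → Set (Fin n → Submodule K (Fin m → K)) := fun b => Set.range fun a => γ (a, b)
  have hCdim : ∀ b, ∀ X ∈ C b, ∀ i, finrank K (X i) = l := by
    rintro b _ ⟨a, rfl⟩
    exact hdim _
  have hCcard : ∀ b, Nat.card (C b) = Nat.card M₁ := fun b =>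
    Nat.card_range_of_injective fun a a' h => congrArg Prod.fst (hγ h)
  have hCdist : ∀ b, ∀ X ∈ C b, ∀ Y ∈ C b, X ≠ Y → s₁ ≤ dSn X Y := by
    rintro b _ ⟨a, rfl⟩ _ ⟨a', rfl⟩ hne
    exact hs₁.2 ⟨(a, b), (a', b), fun h => hne (by rw [show a = a' from h]), rfl⟩
  obtain ⟨⟨a₀, b₀⟩, p', hp, -⟩ := hs₁.1
  have hn : n ≠ 0 := by
    rintro rfl
    exact hp (congrArg Prod.fst (hγ (Subsingleton.elim _ _)))
  have : Nonempty M₁ := ⟨a₀⟩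
  have hT : 0 < T := Nat.card_pos.trans_le (le_Tnl (hCdim b₀) (hCcard b₀) (hCdist b₀))
  have hpacking : Nat.card M₂ * T ≤ gaussCard K m l ^ n := by
    rw [← card_constDim_tuples]
    refine card_mul_le_card_of_pairwise_disjoint (s := fun b => nbhdG l r (C b))
      (fun b b' hbb' => disjoint_nbhdG ?_) (fun b => nbhdG_subset_constDim _)
      (fun b => Tnl_le_card_nbhdG (hCdim b) (hCcard b) (hCdist b))
    rintro _ ⟨a, rfl⟩ _ ⟨a', rfl⟩
    dsimp only
    -- `2 * ((s₂ - 1) / 2) < s₂` needs `s₂ ≠ 0`, which `hs` provides.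
    have := hs₂.2 ⟨(a, b), (a', b'), hbb', rfl⟩
    omega
  rw [lt_div_iff₀ (by exact_mod_cast hT)]
  calc (Nat.card M₂ : ℝ) * T ≤ (gaussCard K m l : ℝ) ^ n := by exact_mod_cast hpacking
    _ < (4 * (q : ℝ) ^ (l * (m - l))) ^ n :=
        pow_lt_pow_left₀ (hq ▸ gaussCard_lt K hlm.le) (Nat.cast_nonneg _) hn
    _ = (4 : ℝ) ^ n * (q : ℝ) ^ (n * (l * (m - l))) := by rw [mul_pow, ← pow_mul, mul_comm n]

/-- Sphere packing bound for constant-dimension broadcast subspace codes: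
`|M₂| < 4^n q^{n l (m-l)} / T_{n,l}(s₁,|M₁|,⌊(s₂-1)/2⌋)`. -/
theorem stmt10 (q m n l : ℕ) (hl : 0 < l) (hlm : l < m)
    (K : Type*) [Field K] [Fintype K] (hq : Fintype.card K = q)
    (M₁ M₂ : Type*) [Finite M₁] [Finite M₂]
    (hM₁ : 2 ≤ Nat.card M₁) (hM₂ : 2 ≤ Nat.card M₂)
    (γ : M₁ × M₂ → (Fin n → Submodule K (Fin m → K))) (hγ : Function.Injective γ)
    (hdim : ∀ p i, finrank K ↥(γ p i) = l)
    (s₁ s₂ : ℕ) (hs : s₁ < s₂)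
    (hs₁ : IsLeast {d | ∃ p p' : M₁ × M₂, p.1 ≠ p'.1 ∧ d = dSn (γ p) (γ p')} s₁)
    (hs₂ : IsLeast {d | ∃ p p' : M₁ × M₂, p.2 ≠ p'.2 ∧ d = dSn (γ p) (γ p')} s₂) :
    (Nat.card M₂ : ℝ) <
      (4 : ℝ) ^ n * (q : ℝ) ^ (n * (l * (m - l))) /
        (Tnl K m n l s₁ (Nat.card M₁) ((s₂ - 1) / 2) : ℝ) :=
  stmt10_general q m n l hlm K hq M₁ M₂ γ hγ hdim s₁ s₂ hs hs₁ hs₂
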